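/- arXiv:1910.00934 — 3 statements merged into one kernel-verified Lean document; each statement's English description precedes it below -/
import Mathlib

section
/- Let (X,d) be a metric space and f : X → X a topologically transitive homeomorphism. Then the NADS f_{1,∞} defined by f_{4n−3} = f_{4n} = f^n and f_{4n−2} = f_{4n−1} = f^{−n} for each n ≥ 1 is topologically transitive. -/
/-- `nadsComp F n = F_1^{(n)} = F_n ∘ F_{n-1} ∘ ⋯ ∘ F_1` for a 1-indexed sequence of maps
(`F i` is the map `F_i`; the value of `F 0` is irrelevant). -/
def nadsComp {X : Type*} (F : ℕ → X → X) : ℕ → X → X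
  | 0 => id
  | n + 1 => F (n + 1) ∘ nadsComp F n

/-- `F` is the sequence `f, f⁻¹, f⁻¹, f, f², f⁻², f⁻², f², …`, i.e.
`F_{4n-3} = F_{4n} = f^n` and `F_{4n-2} = F_{4n-1} = f^{-n}` for every `n ≥ 1`
(integer powers are taken in the group of bijections of `X`). -/
def IsExampleSeq {X : Type*} [TopologicalSpace X] (f : X ≃ₜ X) (F : ℕ → X → X) : Prop :=
  ∀ n : ℕ, 1 ≤ n →
    F (4 * n - 3) = ⇑(f.toEquiv ^ (n : ℤ)) ∧
    F (4 * n - 2) = ⇑(f.toEquiv ^ (-(n : ℤ))) ∧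
    F (4 * n - 1) = ⇑(f.toEquiv ^ (-(n : ℤ))) ∧
    F (4 * n) = ⇑(f.toEquiv ^ (n : ℤ))

/-- If `f` is a topologically transitive homeomorphism of a metric space, then the NADS
`f, f⁻¹, f⁻¹, f, f², f⁻², f⁻², f², …` is topologically transitive. -/
theorem example_seq_topologically_transitive {X : Type*} [MetricSpace X] (f : X ≃ₜ X)
    (htrans : ∀ U V : Set X, IsOpen U → IsOpen V → U.Nonempty → V.Nonempty →
      ∃ n : ℕ, ((⇑f)^[n] '' U ∩ V).Nonempty)
    (F : ℕ → X → X) (hF : IsExampleSeq f F) :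
    ∀ U V : Set X, IsOpen U → IsOpen V → U.Nonempty → V.Nonempty →
      ∃ n : ℕ, (nadsComp F n '' U ∩ V).Nonempty := by
  have key : ∀ k : ℕ, nadsComp F (4 * k) = id := by
    intro k
    induction k with
    | zero => rfl
    | succ k ih =>
      obtain ⟨h1, h2, h3, h4⟩ := hF (k + 1) (by omega)
      have e1 : 4 * (k + 1) - 3 = 4 * k + 1 := by omega
      have e2 : 4 * (k + 1) - 2 = 4 * k + 2 := by omega
      have e3 : 4 * (k + 1) - 1 = 4 * k + 3 := by omega
      have e4 : 4 * (k + 1) = 4 * k + 4 := by omega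
      rw [e1] at h1; rw [e2] at h2; rw [e3] at h3; rw [e4] at h4
      show nadsComp F (4 * k + 4) = id
      funext x
      simp only [nadsComp, Function.comp_apply, h1, h2, h3, h4, ih]
      simp only [← Equiv.Perm.mul_apply, ← zpow_add]
      have hz : ((↑(k+1) : ℤ) + (-(↑(k+1):ℤ) + (-(↑(k+1):ℤ) + (↑(k+1):ℤ)))) = 0 := by ring
      rw [hz]
      simp
  intro U V hU hV hUne hVne
  obtain ⟨m, hm⟩ := htrans U V hU hV hUne hVne
  rcases Nat.eq_zero_or_pos m with hm0 | hmpos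
  · exact ⟨0, by simpa [hm0, nadsComp] using hm⟩
  · refine ⟨4 * (m - 1) + 1, ?_⟩
    obtain ⟨h1, _, _, _⟩ := hF m hmpos
    have e1 : 4 * m - 3 = 4 * (m - 1) + 1 := by omega
    rw [e1] at h1
    have : nadsComp F (4 * (m - 1) + 1) = (⇑f)^[m] := by
      funext x
      simp only [nadsComp, Function.comp_apply, h1, key]
      simp [zpow_natCast, ← Equiv.Perm.coe_pow]
      rfl
    rw [this]
    exact hm
end

section
/- Let (X,d) be a metric space and f : X → X a homeomorphism, and let f_{1,∞} be the NADS defined by f_{4n−3} = f_{4n} = f^n and f_{4n−2} = f_{4n−1} = f^{−n} for each n ≥ 1. Then for every x ∈ X, orb(x, f_{1,∞}) = {f^k(x) : k ∈ ℤ}, this set is invariant under every f_i, and hence every point of X is an invariant periodic point of f_{1,∞} and Per(f_{1,∞}) = X. -/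
/-- For the NADS `f, f⁻¹, f⁻¹, f, f², f⁻², f⁻², f², …` built from a homeomorphism `f`:
for every `x`, `orb(x, F_{1,∞}) = {f^k(x) : k ∈ ℤ}`, this set is invariant under every `F i`,
every point of `X` is an invariant periodic point, and `Per(F_{1,∞}) = X`. -/
theorem example_seq_orbit_eq_zpow_orbit {X : Type*} [MetricSpace X] (f : X ≃ₜ X)
    (F : ℕ → X → X) (hF : IsExampleSeq f F) :
    (∀ x : X,
      Set.range (fun n : ℕ => nadsComp F n x) = Set.range (fun k : ℤ => (f.toEquiv ^ k) x) ∧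
      (∀ i : ℕ, 1 ≤ i → F i '' Set.range (fun n : ℕ => nadsComp F n x) ⊆
        Set.range (fun n : ℕ => nadsComp F n x)) ∧
      (∃ m : ℕ, 1 ≤ m ∧ ∀ k : ℕ, nadsComp F (m * k) x = x)) ∧
    {x : X | ∃ m : ℕ, 1 ≤ m ∧ ∀ k : ℕ, nadsComp F (m * k) x = x} = Set.univ := by
  set g := f.toEquiv with hg
  have comp_pow : ∀ a b : ℤ, (⇑(g ^ a)) ∘ (⇑(g ^ b)) = ⇑(g ^ (a + b)) := by
    intro a b; funext y
    simp [zpow_add, Equiv.Perm.mul_apply, Function.comp]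
  have hexp : ∀ a b : ℤ, a = b → (⇑(g ^ a) : X → X) = ⇑(g ^ b) := by
    intro a b h; rw [h]
  have gzero : (⇑(g ^ (0 : ℤ)) : X → X) = id := by simp
  have succ_eq : ∀ n : ℕ, nadsComp F (n + 1) = F (n + 1) ∘ nadsComp F n := fun n => rfl
  have key : ∀ k : ℕ,
      nadsComp F (4*k) = id ∧
      nadsComp F (4*k+1) = ⇑(g ^ ((k : ℤ)+1)) ∧
      nadsComp F (4*k+2) = id ∧
      nadsComp F (4*k+3) = ⇑(g ^ (-((k : ℤ)+1))) := by
    intro k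
    induction k with
    | zero =>
      obtain ⟨h1, h2, h3, h4⟩ := hF 1 le_rfl
      rw [show 4 * 1 - 3 = 1 from rfl, ← hg] at h1
      rw [show 4 * 1 - 2 = 2 from rfl, ← hg] at h2
      rw [show 4 * 1 - 1 = 3 from rfl, ← hg] at h3
      have c0 : nadsComp F (4*0) = id := rfl
      have c1 : nadsComp F (4*0+1) = ⇑(g ^ ((0:ℤ)+1)) := by
        rw [show 4*0+1 = 0+1 from rfl, succ_eq, c0, Function.comp_id, h1]
        try exact hexp _ _ (by push_cast; try ring)
      have c2 : nadsComp F (4*0+2) = id := by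
        rw [show 4*0+2 = (4*0+1)+1 from rfl, succ_eq, c1, h2, comp_pow]
        try exact Eq.trans (hexp _ 0 (by push_cast; try ring)) gzero
      have c3 : nadsComp F (4*0+3) = ⇑(g ^ (-((0:ℤ)+1))) := by
        rw [show 4*0+3 = (4*0+2)+1 from rfl, succ_eq, c2, Function.comp_id, h3]
        try exact hexp _ _ (by push_cast; try ring)
      exact ⟨c0, c1, c2, c3⟩
    | succ k ih =>
      obtain ⟨_, _, _, ih3⟩ := ih
      obtain ⟨h1, h2, h3, h4⟩ := hF (k + 2) (by omega)
      rw [show 4 * (k + 2) - 3 = 4*(k+1)+1 from by omega, ← hg] at h1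
      rw [show 4 * (k + 2) - 2 = 4*(k+1)+2 from by omega, ← hg] at h2
      rw [show 4 * (k + 2) - 1 = 4*(k+1)+3 from by omega, ← hg] at h3
      obtain ⟨_, _, _, h4'⟩ := hF (k + 1) (by omega)
      have e4 : 4 * (k + 1) = (4*k+3)+1 := by omega
      rw [e4, ← hg] at h4'
      have c0 : nadsComp F (4*(k+1)) = id := by
        rw [e4, succ_eq, h4', ih3, comp_pow]
        try exact Eq.trans (hexp _ 0 (by push_cast; try ring)) gzero
      have c1 : nadsComp F (4*(k+1)+1) = ⇑(g ^ (((k+1 : ℕ) : ℤ)+1)) := by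
        rw [succ_eq (4*(k+1)), c0, Function.comp_id, h1]
        try exact hexp _ _ (by push_cast; try ring)
      have c2 : nadsComp F (4*(k+1)+2) = id := by
        rw [show 4*(k+1)+2 = (4*(k+1)+1)+1 from rfl, succ_eq, c1, h2, comp_pow]
        try exact Eq.trans (hexp _ 0 (by push_cast; try ring)) gzero
      have c3 : nadsComp F (4*(k+1)+3) = ⇑(g ^ (-(((k+1:ℕ) : ℤ)+1))) := by
        rw [show 4*(k+1)+3 = (4*(k+1)+2)+1 from rfl, succ_eq, c2, Function.comp_id, h3]
        try exact hexp _ _ (by push_cast; try ring)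
      exact ⟨c0, c1, c2, c3⟩
  have orb_eq : ∀ x : X,
      Set.range (fun n : ℕ => nadsComp F n x) = Set.range (fun k : ℤ => (g ^ k) x) := by
    intro x
    ext y
    constructor
    · rintro ⟨n, rfl⟩
      obtain ⟨q, r, hr, rfl⟩ : ∃ q r : ℕ, r < 4 ∧ n = 4*q + r := ⟨n/4, n%4, by omega, by omega⟩
      obtain ⟨k0, k1, k2, k3⟩ := key q
      interval_cases r
      · refine ⟨0, ?_⟩
        simp only [show 4*q+0 = 4*q from rfl, k0, gzero]
      · exact ⟨(q:ℤ)+1, by simp [k1]⟩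
      · refine ⟨0, ?_⟩
        simp only [k2, gzero]
      · exact ⟨-((q:ℤ)+1), by simp [k3]⟩
    · rintro ⟨k, rfl⟩
      obtain ⟨m, hm | hm⟩ : ∃ m : ℕ, k = (m : ℤ) ∨ k = -(m : ℤ) :=
        ⟨k.natAbs, by omega⟩
      · cases m with
        | zero =>
          refine ⟨0, ?_⟩
          simp only [hm, Nat.cast_zero, show nadsComp F 0 x = x from rfl]
          exact (congrFun gzero x).symm
        | succ j =>
          refine ⟨4*j+1, ?_⟩
          simp only [(key j).2.1]
          exact congrFun (hexp _ _ (by rw [hm]; push_cast; ring)) x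
      · cases m with
        | zero =>
          refine ⟨0, ?_⟩
          simp only [hm, Nat.cast_zero, neg_zero, show nadsComp F 0 x = x from rfl]
          exact (congrFun gzero x).symm
        | succ j =>
          refine ⟨4*j+3, ?_⟩
          simp only [(key j).2.2.2]
          exact congrFun (hexp _ _ (by rw [hm]; push_cast; ring)) x
  have Fpow : ∀ i : ℕ, 1 ≤ i → ∃ j : ℤ, F i = ⇑(g ^ j) := by
    intro i hi
    obtain ⟨n, hn, hc⟩ : ∃ n : ℕ, 1 ≤ n ∧
        (i = 4*n-3 ∨ i = 4*n-2 ∨ i = 4*n-1 ∨ i = 4*n) := ⟨(i+3)/4, by omega, by omega⟩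
    obtain ⟨h1, h2, h3, h4⟩ := hF n hn
    rcases hc with rfl | rfl | rfl | rfl
    · exact ⟨(n:ℤ), h1⟩
    · exact ⟨-(n:ℤ), h2⟩
    · exact ⟨-(n:ℤ), h3⟩
    · exact ⟨(n:ℤ), h4⟩
  have main : ∀ x : X,
      Set.range (fun n : ℕ => nadsComp F n x) = Set.range (fun k : ℤ => (g ^ k) x) ∧
      (∀ i : ℕ, 1 ≤ i → F i '' Set.range (fun n : ℕ => nadsComp F n x) ⊆
        Set.range (fun n : ℕ => nadsComp F n x)) ∧
      (∃ m : ℕ, 1 ≤ m ∧ ∀ k : ℕ, nadsComp F (m * k) x = x) := by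
    intro x
    refine ⟨orb_eq x, ?_, 4, by norm_num, fun k => by rw [(key k).1]; rfl⟩
    intro i hi
    rw [orb_eq x]
    rintro y ⟨z, ⟨k, rfl⟩, rfl⟩
    obtain ⟨j, hj⟩ := Fpow i hi
    refine ⟨j + k, ?_⟩
    rw [hj]
    have := congrFun (comp_pow j k) x
    simpa [Function.comp] using this.symm
  refine ⟨main, ?_⟩
  ext x
  simp only [Set.mem_setOf_eq, Set.mem_univ, iff_true]
  exact (main x).2.2
end

section
/- Let (X,d) be a nonempty metric space without isolated points and f : X → X a topologically transitive homeomorphism that is not minimal and such that the family {f^k : k ∈ ℤ} is equicontinuous at some point of X. Then the NADS f_{1,∞} defined by f_{4n−3} = f_{4n} = f^n and f_{4n−2} = f_{4n−1} = f^{−n} for each n ≥ 1 is not finitely generated, is topologically transitive, satisfies Per(f_{1,∞}) = X, admits two invariant periodic points x, y with orb(x, f_{1,∞}) ∩ orb(y, f_{1,∞}) = ∅, and is not sensitive. -/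
/-! The partial compositions of the sequence are `id, f^(m+1), id, f^-(m+1)` on the block
`4m+1, …, 4m+4`, so they run through exactly the integer powers of `f`. Hence transitivity passes
from `f` to the sequence, every point returns to itself at each multiple of `4`, orbits of the
sequence are the `ℤ`-orbits of `f` (and so are invariant under every `f_i`), and equicontinuity
of `{f^k}` at `x₀` rules out sensitivity.

Transitivity together with equicontinuity at `x₀` makes the forward orbit of `x₀`, and of every
point in its `ℤ`-orbit, dense. A dense orbit cannot be finite when there are no isolated points,
so `f` has infinite order and the generators `f_{4m+1} = f^(m+1)` are pairwise distinct; and a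
point with non-dense orbit, which exists as `f` is not minimal, has a `ℤ`-orbit disjoint from
that of `x₀`. -/

open Function Set Filter Topology Metric

theorem Homeomorph.toEquiv_zpow {X : Type*} [TopologicalSpace X] (f : X ≃ₜ X) (k : ℤ) :
    (f ^ k).toEquiv = f.toEquiv ^ k :=
  map_zpow (MonoidHom.mk' (Homeomorph.toEquiv : (X ≃ₜ X) → Equiv.Perm X) fun _ _ => rfl) f k

theorem Homeomorph.continuous_toEquiv_zpow {X : Type*} [TopologicalSpace X] (f : X ≃ₜ X)
    (k : ℤ) : Continuous ⇑(f.toEquiv ^ k) := by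
  rw [← f.toEquiv_zpow, Homeomorph.coe_toEquiv]
  exact (f ^ k).continuous

theorem Equiv.Perm.zpow_apply_zpow_apply {X : Type*} (g : Equiv.Perm X) (a b : ℤ) (x : X) :
    (g ^ a) ((g ^ b) x) = (g ^ (a + b)) x := by
  rw [← Equiv.Perm.mul_apply, ← zpow_add]

theorem EquicontinuousAt.zpow_apply {X : Type*} [UniformSpace X] {g : Equiv.Perm X} {x : X}
    (hcont : ∀ k : ℤ, Continuous ⇑(g ^ k)) (h : EquicontinuousAt (fun k : ℤ => ⇑(g ^ k)) x)
    (j : ℤ) : EquicontinuousAt (fun k : ℤ => ⇑(g ^ k)) ((g ^ j) x) := by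
  intro U hU
  have hback : Tendsto ⇑(g ^ (-j)) (𝓝 ((g ^ j) x)) (𝓝 x) := by
    simpa only [g.zpow_apply_zpow_apply, neg_add_cancel, zpow_zero, Equiv.Perm.one_apply]
      using (hcont (-j)).tendsto ((g ^ j) x)
  filter_upwards [hback.eventually (h U hU)] with y hy k
  simpa only [g.zpow_apply_zpow_apply, add_neg_cancel_right] using hy (k + j)

theorem EquicontinuousAt.iterate_of_zpow {X : Type*} [UniformSpace X] {g : Equiv.Perm X}
    {x : X} (h : EquicontinuousAt (fun k : ℤ => ⇑(g ^ k)) x) :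
    EquicontinuousAt (fun n : ℕ => (⇑g)^[n]) x := by
  simpa [Function.comp_def, Equiv.Perm.coe_pow] using h.comp (Nat.cast : ℕ → ℤ)

theorem not_isOfFinOrder_of_dense_range_iterate {X : Type*} [TopologicalSpace X] [T1Space X]
    [∀ x : X, (𝓝[≠] x).NeBot] {g : Equiv.Perm X} {x : X}
    (hd : Dense (range fun n : ℕ => (⇑g)^[n] x)) : ¬ IsOfFinOrder g := by
  intro hg
  have hfin : (range fun n : ℕ => (⇑g)^[n] x).Finite := by
    refine (hg.finite_powers.image fun h : Equiv.Perm X => h x).subset ?_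
    rintro _ ⟨n, rfl⟩
    exact ⟨g ^ n, ⟨n, rfl⟩, rfl⟩
  have huniv : (univ : Set X).Finite := by
    rwa [← hd.closure_eq, hfin.isClosed.closure_eq]
  exact infinite_of_mem_nhds x univ_mem huniv

theorem dense_range_iterate_of_equicontinuousAt {X : Type*} [PseudoMetricSpace X] {g : X → X}
    (htrans : ∀ U V : Set X, IsOpen U → IsOpen V → U.Nonempty → V.Nonempty →
      ∃ n : ℕ, (g^[n] '' U ∩ V).Nonempty)
    {x : X} (hx : EquicontinuousAt (fun n : ℕ => g^[n]) x) :
    Dense (range fun n : ℕ => g^[n] x) := by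
  refine Metric.dense_iff.2 fun v r hr => ?_
  obtain ⟨δ, hδ, hδx⟩ := Metric.equicontinuousAt_iff.1 hx (r / 2) (half_pos hr)
  obtain ⟨n, _, ⟨z, hz, rfl⟩, hzv⟩ := htrans (ball x δ) (ball v (r / 2)) isOpen_ball isOpen_ball
    ⟨x, mem_ball_self hδ⟩ ⟨v, mem_ball_self (half_pos hr)⟩
  refine ⟨g^[n] x, ?_, n, rfl⟩
  calc dist (g^[n] x) v ≤ dist (g^[n] x) (g^[n] z) + dist (g^[n] z) v := dist_triangle _ _ _
    _ < r / 2 + r / 2 := add_lt_add (hδx z hz n) hzv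
    _ = r := add_halves r

theorem not_sensitive_of_equicontinuousAt {X : Type*} [PseudoMetricSpace X] {G : ℕ → X → X}
    {x : X} (hx : EquicontinuousAt G x) :
    ¬ ∃ ε : ℝ, 0 < ε ∧ ∀ x : X, ∀ δ : ℝ, 0 < δ →
      ∃ y : X, ∃ n : ℕ, dist x y < δ ∧ ε ≤ dist (G n x) (G n y) := by
  rintro ⟨ε, hε, hsens⟩
  obtain ⟨δ, hδ, hδx⟩ := Metric.equicontinuousAt_iff.1 hx ε hε
  obtain ⟨y, n, hy, hsep⟩ := hsens x δ hδ
  exact (hδx y (by rwa [dist_comm]) n).not_ge hsep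

theorem Homeomorph.dense_range_iterate_of_equicontinuousAt_zpow {X : Type*} [PseudoMetricSpace X]
    {f : X ≃ₜ X}
    (htrans : ∀ U V : Set X, IsOpen U → IsOpen V → U.Nonempty → V.Nonempty →
      ∃ n : ℕ, ((⇑f)^[n] '' U ∩ V).Nonempty)
    {x : X} (hx : EquicontinuousAt (fun k : ℤ => ⇑(f.toEquiv ^ k)) x) :
    Dense (range fun n : ℕ => (⇑f)^[n] x) :=
  dense_range_iterate_of_equicontinuousAt htrans (by simpa using hx.iterate_of_zpow)

theorem Homeomorph.disjoint_range_zpow_apply {X : Type*} [PseudoMetricSpace X] {f : X ≃ₜ X}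
    (htrans : ∀ U V : Set X, IsOpen U → IsOpen V → U.Nonempty → V.Nonempty →
      ∃ n : ℕ, ((⇑f)^[n] '' U ∩ V).Nonempty)
    {x z : X} (hx : EquicontinuousAt (fun k : ℤ => ⇑(f.toEquiv ^ k)) x)
    (hz : ¬ Dense (range fun n : ℕ => (⇑f)^[n] z)) :
    Disjoint (range fun k : ℤ => (f.toEquiv ^ k) x) (range fun k : ℤ => (f.toEquiv ^ k) z) := by
  rw [Set.disjoint_left]
  rintro _ ⟨a, rfl⟩ ⟨b, hb : (f.toEquiv ^ b) z = (f.toEquiv ^ a) x⟩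
  have hzx : z = (f.toEquiv ^ (-b + a)) x := by
    rw [← Equiv.Perm.zpow_apply_zpow_apply, ← hb, Equiv.Perm.zpow_apply_zpow_apply,
      neg_add_cancel, zpow_zero, Equiv.Perm.one_apply]
  exact hz (hzx ▸ dense_range_iterate_of_equicontinuousAt_zpow htrans
    (hx.zpow_apply f.continuous_toEquiv_zpow _))

theorem nadsComp_succ {X : Type*} (F : ℕ → X → X) (n : ℕ) :
    nadsComp F (n + 1) = F (n + 1) ∘ nadsComp F n := rfl

namespace IsExampleSeq

variable {X : Type*} [TopologicalSpace X] {f : X ≃ₜ X} {F : ℕ → X → X}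

theorem apply_four_mul_add (hF : IsExampleSeq f F) (m : ℕ) :
    F (4 * m + 1) = ⇑(f.toEquiv ^ ((m : ℤ) + 1)) ∧
    F (4 * m + 2) = ⇑(f.toEquiv ^ (-((m : ℤ) + 1))) ∧
    F (4 * m + 3) = ⇑(f.toEquiv ^ (-((m : ℤ) + 1))) ∧
    F (4 * m + 4) = ⇑(f.toEquiv ^ ((m : ℤ) + 1)) := by
  have h := hF (m + 1) (Nat.le_add_left 1 m)
  rwa [show 4 * (m + 1) - 3 = 4 * m + 1 by omega, show 4 * (m + 1) - 2 = 4 * m + 2 by omega,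
    show 4 * (m + 1) - 1 = 4 * m + 3 by omega, show 4 * (m + 1) = 4 * m + 4 by omega,
    Nat.cast_succ] at h

theorem exists_eq_zpow (hF : IsExampleSeq f F) {i : ℕ} (hi : 1 ≤ i) :
    ∃ k : ℤ, F i = ⇑(f.toEquiv ^ k) := by
  obtain ⟨m, rfl | rfl | rfl | rfl⟩ :
      ∃ m, i = 4 * m + 1 ∨ i = 4 * m + 2 ∨ i = 4 * m + 3 ∨ i = 4 * m + 4 :=
    ⟨(i - 1) / 4, by omega⟩
  · exact ⟨_, (hF.apply_four_mul_add m).1⟩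
  · exact ⟨_, (hF.apply_four_mul_add m).2.1⟩
  · exact ⟨_, (hF.apply_four_mul_add m).2.2.1⟩
  · exact ⟨_, (hF.apply_four_mul_add m).2.2.2⟩

theorem nadsComp_four_mul_add_two (hF : IsExampleSeq f F) (m : ℕ) :
    nadsComp F (4 * m + 2) = nadsComp F (4 * m) := by
  obtain ⟨h1, h2, -, -⟩ := hF.apply_four_mul_add m
  change F (4 * m + 2) ∘ F (4 * m + 1) ∘ nadsComp F (4 * m) = _
  rw [h1, h2, ← Function.comp_assoc, ← Equiv.Perm.coe_mul, ← zpow_add, neg_add_cancel, zpow_zero,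
    Equiv.Perm.coe_one, Function.id_comp]

theorem nadsComp_four_mul (hF : IsExampleSeq f F) (m : ℕ) : nadsComp F (4 * m) = id := by
  induction m with
  | zero => rfl
  | succ m ih =>
    obtain ⟨-, -, h3, h4⟩ := hF.apply_four_mul_add m
    change F (4 * m + 4) ∘ F (4 * m + 3) ∘ nadsComp F (4 * m + 2) = id
    rw [hF.nadsComp_four_mul_add_two, ih, h3, h4, Function.comp_id, ← Equiv.Perm.coe_mul,
      ← zpow_add, add_neg_cancel, zpow_zero, Equiv.Perm.coe_one]

theorem nadsComp_four_mul_add_one (hF : IsExampleSeq f F) (m : ℕ) :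
    nadsComp F (4 * m + 1) = ⇑(f.toEquiv ^ ((m : ℤ) + 1)) := by
  rw [nadsComp_succ, hF.nadsComp_four_mul, (hF.apply_four_mul_add m).1, Function.comp_id]

theorem nadsComp_four_mul_add_three (hF : IsExampleSeq f F) (m : ℕ) :
    nadsComp F (4 * m + 3) = ⇑(f.toEquiv ^ (-((m : ℤ) + 1))) := by
  rw [nadsComp_succ, hF.nadsComp_four_mul_add_two, hF.nadsComp_four_mul,
    (hF.apply_four_mul_add m).2.2.1, Function.comp_id]

theorem range_nadsComp (hF : IsExampleSeq f F) :
    range (nadsComp F) = range fun k : ℤ => ⇑(f.toEquiv ^ k) := by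
  apply Subset.antisymm
  · rintro _ ⟨n, rfl⟩
    obtain ⟨m, rfl | rfl | rfl | rfl⟩ :
        ∃ m, n = 4 * m ∨ n = 4 * m + 1 ∨ n = 4 * m + 2 ∨ n = 4 * m + 3 :=
      ⟨n / 4, by omega⟩
    · exact ⟨0, by rw [hF.nadsComp_four_mul]; rfl⟩
    · exact ⟨_, (hF.nadsComp_four_mul_add_one m).symm⟩
    · exact ⟨0, by rw [hF.nadsComp_four_mul_add_two, hF.nadsComp_four_mul]; rfl⟩
    · exact ⟨_, (hF.nadsComp_four_mul_add_three m).symm⟩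
  · rintro _ ⟨(_ | m) | m, rfl⟩
    · exact ⟨0, rfl⟩
    · exact ⟨4 * m + 1, by rw [hF.nadsComp_four_mul_add_one]; rfl⟩
    · exact ⟨4 * m + 3, by rw [hF.nadsComp_four_mul_add_three, Int.negSucc_eq]⟩

theorem range_nadsComp_apply (hF : IsExampleSeq f F) (x : X) :
    range (fun n : ℕ => nadsComp F n x) = range fun k : ℤ => (f.toEquiv ^ k) x := by
  have h := congrArg (image fun g : X → X => g x) hF.range_nadsComp
  rwa [← range_comp, ← range_comp] at h

theorem image_range_nadsComp_apply_subset (hF : IsExampleSeq f F) {i : ℕ} (hi : 1 ≤ i) (x : X) :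
    F i '' range (fun n : ℕ => nadsComp F n x) ⊆ range (fun n : ℕ => nadsComp F n x) := by
  obtain ⟨c, hc⟩ := hF.exists_eq_zpow hi
  rw [hF.range_nadsComp_apply, hc]
  rintro _ ⟨_, ⟨k, rfl⟩, rfl⟩
  exact ⟨c + k, (Equiv.Perm.zpow_apply_zpow_apply f.toEquiv c k x).symm⟩

theorem infinite_setOf_apply_eq (hF : IsExampleSeq f F) (hf : ¬ IsOfFinOrder f.toEquiv) :
    {g : X → X | ∃ i : ℕ, 1 ≤ i ∧ F i = g}.Infinite := by
  refine infinite_of_injective_forall_mem (f := fun m : ℕ => F (4 * m + 1)) ?_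
    fun m => ⟨4 * m + 1, by omega, rfl⟩
  intro a b hab
  simp only [(hF.apply_four_mul_add _).1] at hab
  have := injective_zpow_iff_not_isOfFinOrder.2 hf (DFunLike.coe_injective hab)
  omega

end IsExampleSeq

theorem IsExampleSeq.equicontinuousAt_nadsComp {X : Type*} [UniformSpace X] {f : X ≃ₜ X}
    {F : ℕ → X → X} (hF : IsExampleSeq f F) {x : X}
    (hx : EquicontinuousAt (fun k : ℤ => ⇑(f.toEquiv ^ k)) x) : EquicontinuousAt (nadsComp F) x :=
  equicontinuousAt_iff_range.2 <|
    (equicontinuousAt_iff_range.1 hx : Set.EquicontinuousAt _ x).mono hF.range_nadsComp.subset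

theorem example_seq_answers_open_problem_general {X : Type*} [MetricSpace X]
    (hX : ∀ x : X, Filter.NeBot (nhdsWithin x {x}ᶜ))
    (f : X ≃ₜ X)
    (htrans : ∀ U V : Set X, IsOpen U → IsOpen V → U.Nonempty → V.Nonempty →
      ∃ n : ℕ, ((⇑f)^[n] '' U ∩ V).Nonempty)
    (hnotmin : ¬ ∀ x : X, Dense (Set.range fun n : ℕ => (⇑f)^[n] x))
    (heq : ∃ x₀ : X, ∀ ε : ℝ, 0 < ε → ∃ δ : ℝ, 0 < δ ∧ ∀ y : X, dist x₀ y < δ →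
      ∀ k : ℤ, dist ((f.toEquiv ^ k) x₀) ((f.toEquiv ^ k) y) < ε)
    (F : ℕ → X → X) (hF : IsExampleSeq f F) :
    (¬ {g : X → X | ∃ i : ℕ, 1 ≤ i ∧ F i = g}.Finite) ∧
    (∀ U V : Set X, IsOpen U → IsOpen V → U.Nonempty → V.Nonempty →
      ∃ n : ℕ, (nadsComp F n '' U ∩ V).Nonempty) ∧
    {x : X | ∃ m : ℕ, 1 ≤ m ∧ ∀ k : ℕ, nadsComp F (m * k) x = x} = Set.univ ∧
    (∃ x y : X,
      (∃ m : ℕ, 1 ≤ m ∧ ∀ k : ℕ, nadsComp F (m * k) x = x) ∧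
      (∃ m : ℕ, 1 ≤ m ∧ ∀ k : ℕ, nadsComp F (m * k) y = y) ∧
      (∀ i : ℕ, 1 ≤ i → F i '' Set.range (fun n : ℕ => nadsComp F n x) ⊆
        Set.range (fun n : ℕ => nadsComp F n x)) ∧
      (∀ i : ℕ, 1 ≤ i → F i '' Set.range (fun n : ℕ => nadsComp F n y) ⊆
        Set.range (fun n : ℕ => nadsComp F n y)) ∧
      Set.range (fun n : ℕ => nadsComp F n x) ∩ Set.range (fun n : ℕ => nadsComp F n y) = ∅) ∧
    ¬ ∃ ε : ℝ, 0 < ε ∧ ∀ x : X, ∀ δ : ℝ, 0 < δ →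
      ∃ y : X, ∃ n : ℕ, dist x y < δ ∧ ε ≤ dist (nadsComp F n x) (nadsComp F n y) := by
  obtain ⟨x₀, hx₀⟩ := heq
  have hequi : EquicontinuousAt (fun k : ℤ => ⇑(f.toEquiv ^ k)) x₀ :=
    Metric.equicontinuousAt_iff.2 fun ε hε => by
      obtain ⟨δ, hδ, h⟩ := hx₀ ε hε
      exact ⟨δ, hδ, fun y hy => h y (by rwa [dist_comm])⟩
  have hper (x : X) : ∃ m : ℕ, 1 ≤ m ∧ ∀ k : ℕ, nadsComp F (m * k) x = x :=
    ⟨4, by norm_num, fun k => by rw [hF.nadsComp_four_mul]; rfl⟩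
  obtain ⟨z, hz⟩ := not_forall.1 hnotmin
  refine ⟨?_, ?_, eq_univ_of_forall hper, ⟨x₀, z, hper x₀, hper z,
    fun i hi => hF.image_range_nadsComp_apply_subset hi x₀,
    fun i hi => hF.image_range_nadsComp_apply_subset hi z, ?_⟩,
    not_sensitive_of_equicontinuousAt (hF.equicontinuousAt_nadsComp hequi)⟩
  · have : ∀ x : X, (𝓝[≠] x).NeBot := hX
    exact hF.infinite_setOf_apply_eq <| not_isOfFinOrder_of_dense_range_iterate (x := x₀) <| by
      simpa using f.dense_range_iterate_of_equicontinuousAt_zpow htrans hequi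
  · intro U V hU hV hUne hVne
    obtain ⟨n, hn⟩ := htrans U V hU hV hUne hVne
    obtain ⟨m, hm⟩ : ⇑(f.toEquiv ^ (n : ℤ)) ∈ range (nadsComp F) :=
      hF.range_nadsComp ▸ mem_range_self _
    refine ⟨m, ?_⟩
    rwa [hm, zpow_natCast, Equiv.Perm.coe_pow, Homeomorph.coe_toEquiv]
  · rw [hF.range_nadsComp_apply, hF.range_nadsComp_apply]
    exact disjoint_iff_inter_eq_empty.1 (f.disjoint_range_zpow_apply htrans hequi hz)

/-- Example answering Open Problem 4.1 of Yang–Li: if `f` is a topologically transitive,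
non-minimal homeomorphism of a nonempty metric space without isolated points such that the
family `{f^k : k ∈ ℤ}` is equicontinuous at some point, then the NADS
`f, f⁻¹, f⁻¹, f, f², f⁻², f⁻², f², …` is not finitely generated, is topologically transitive,
has `Per = X`, admits two invariant periodic points with disjoint orbits, and is not
sensitive. -/
theorem example_seq_answers_open_problem {X : Type*} [MetricSpace X] [Nonempty X]
    (hX : ∀ x : X, Filter.NeBot (nhdsWithin x {x}ᶜ))
    (f : X ≃ₜ X)
    (htrans : ∀ U V : Set X, IsOpen U → IsOpen V → U.Nonempty → V.Nonempty →
      ∃ n : ℕ, ((⇑f)^[n] '' U ∩ V).Nonempty)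
    (hnotmin : ¬ ∀ x : X, Dense (Set.range fun n : ℕ => (⇑f)^[n] x))
    (heq : ∃ x₀ : X, ∀ ε : ℝ, 0 < ε → ∃ δ : ℝ, 0 < δ ∧ ∀ y : X, dist x₀ y < δ →
      ∀ k : ℤ, dist ((f.toEquiv ^ k) x₀) ((f.toEquiv ^ k) y) < ε)
    (F : ℕ → X → X) (hF : IsExampleSeq f F) :
    (¬ {g : X → X | ∃ i : ℕ, 1 ≤ i ∧ F i = g}.Finite) ∧
    (∀ U V : Set X, IsOpen U → IsOpen V → U.Nonempty → V.Nonempty →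
      ∃ n : ℕ, (nadsComp F n '' U ∩ V).Nonempty) ∧
    {x : X | ∃ m : ℕ, 1 ≤ m ∧ ∀ k : ℕ, nadsComp F (m * k) x = x} = Set.univ ∧
    (∃ x y : X,
      (∃ m : ℕ, 1 ≤ m ∧ ∀ k : ℕ, nadsComp F (m * k) x = x) ∧
      (∃ m : ℕ, 1 ≤ m ∧ ∀ k : ℕ, nadsComp F (m * k) y = y) ∧
      (∀ i : ℕ, 1 ≤ i → F i '' Set.range (fun n : ℕ => nadsComp F n x) ⊆
        Set.range (fun n : ℕ => nadsComp F n x)) ∧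
      (∀ i : ℕ, 1 ≤ i → F i '' Set.range (fun n : ℕ => nadsComp F n y) ⊆
        Set.range (fun n : ℕ => nadsComp F n y)) ∧
      Set.range (fun n : ℕ => nadsComp F n x) ∩ Set.range (fun n : ℕ => nadsComp F n y) = ∅) ∧
    ¬ ∃ ε : ℝ, 0 < ε ∧ ∀ x : X, ∀ δ : ℝ, 0 < δ →
      ∃ y : X, ∃ n : ℕ, dist x y < δ ∧ ε ≤ dist (nadsComp F n x) (nadsComp F n y) :=
  example_seq_answers_open_problem_general hX f htrans hnotmin heq F hF
end
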